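/- Let K be a field of characteristic zero, n ≥ 2, and let D = ∂_{x_1} + Σ_{i=2}^{n} (a_i·x_i + b_i)·∂_{x_i} be the K-derivation of K[x_1,…,x_n] with a_i, b_i ∈ K[x_1,…,x_{i-1}] for each i. If a_n has degree at least 1 in the variable x_{n-1}, then x_n does not belong to Im D = D(K[x_1,…,x_n]); that is, there is no f ∈ K[x_1,…,x_n] with D(f) = x_n. -/

import Mathlib

open MvPolynomial

/-- A `K`-subspace `M` of `R` is a Mathieu–Zhao space if for all `a, b ∈ R` such that
`a ^ m ∈ M` for all `m ≥ 1`, there exists `N` such that `b * a ^ m ∈ M` for all `m ≥ N`. -/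
def IsMathieuZhao (K : Type*) {R : Type*} [Field K] [CommRing R] [Algebra K R]
    (M : Submodule K R) : Prop :=
  ∀ a b : R, (∀ m : ℕ, 1 ≤ m → a ^ m ∈ M) →
    ∃ N : ℕ, ∀ m : ℕ, N ≤ m → b * a ^ m ∈ M

/-- A `K`-derivation `D` of `R` is simple if the only ideals `I` of `R` with `D(I) ⊆ I`
are `0` and `R`. -/
def Derivation.IsSimple {K R : Type*} [CommRing K] [CommRing R] [Algebra K R]
    (D : Derivation K R R) : Prop :=
  ∀ I : Ideal R, (∀ a ∈ I, D a ∈ I) → I = ⊥ ∨ I = ⊤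

/-!
Let `ν` be the last variable and `μ` the one before it. Since `D (X i)` is free of `X ν` for
`i ≠ ν` and `∂_ν (D (X ν)) = a_ν`, the commutator `[∂_ν, D]` is `a_ν ∂_ν`, hence
`∂_ν^k ∘ D = D ∘ ∂_ν^k + k a_ν ∂_ν^k`. If `D f = X ν` and `d = deg_ν f ≥ 1`, then `F = ∂_ν^d f`
is a nonzero polynomial free of `X ν` with `d a_ν F = ∂_ν^d (X ν) - D F`, a constant minus `D F`.
On polynomials free of `X ν`, `D` does not raise the degree in `X μ` (the term `D (X μ) ∂_μ`
gains at most one degree and `∂_μ` loses one), whereas multiplying by `a_ν` raises it.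
If `d = 0`, applying `∂_ν` once to `D f = X ν` gives `0 = 1`.
-/

namespace MvPolynomial

variable {σ R : Type*}

section CommSemiring

variable [CommSemiring R] {i : σ} {p : MvPolynomial σ R}

theorem pderiv_comm (i j : σ) (f : MvPolynomial σ R) :
    pderiv i (pderiv j f) = pderiv j (pderiv i f) := by
  classical
  obtain rfl | hij := eq_or_ne i j
  · rfl
  ext m
  simp only [coeff_pderiv, Finsupp.add_apply, Finsupp.single_apply, if_neg hij,
    if_neg hij.symm, add_zero, add_right_comm m (Finsupp.single i 1)]
  ring

theorem pderiv_eq_zero_of_degreeOf_eq_zero (h : degreeOf i p = 0) : pderiv i p = 0 :=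
  pderiv_eq_zero_of_notMem_vars fun hi => mem_vars_iff_degreeOf_ne_zero.mp hi h

theorem degreeOf_eq_zero_of_mem_supported {s : Set σ} (hp : p ∈ supported R s) (hi : i ∉ s) :
    degreeOf i p = 0 := by
  by_contra h
  exact hi (mem_supported.mp hp (mem_vars_iff_degreeOf_ne_zero.mpr h))

theorem degreeOf_pderiv_le (i j : σ) (p : MvPolynomial σ R) :
    degreeOf i (pderiv j p) ≤ degreeOf i p := by
  refine degreeOf_le_iff.mpr fun m hm => ?_
  rw [mem_support_iff, coeff_pderiv] at hm
  have := le_degreeOf_of_mem_support i (mem_support_iff.mpr (left_ne_zero_of_mul hm))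
  rw [Finsupp.add_apply] at this
  omega

theorem degreeOf_pderiv_self_le (i : σ) (p : MvPolynomial σ R) :
    degreeOf i (pderiv i p) ≤ degreeOf i p - 1 := by
  refine degreeOf_le_iff.mpr fun m hm => ?_
  rw [mem_support_iff, coeff_pderiv] at hm
  have := le_degreeOf_of_mem_support i (mem_support_iff.mpr (left_ne_zero_of_mul hm))
  rw [Finsupp.add_apply, Finsupp.single_eq_same] at this
  omega

theorem degreeOf_iterate_pderiv_le (i j : σ) (k : ℕ) (p : MvPolynomial σ R) :
    degreeOf i ((pderiv j)^[k] p) ≤ degreeOf i p := by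
  induction k with
  | zero => rfl
  | succ k ih =>
    rw [Function.iterate_succ_apply']
    exact (degreeOf_pderiv_le i j _).trans ih

theorem exists_mem_support_apply_eq_degreeOf (i : σ) (hp : p ≠ 0) :
    ∃ m ∈ p.support, m i = degreeOf i p := by
  obtain ⟨m, hm, hmax⟩ := p.support.exists_mem_eq_sup (support_nonempty.mpr hp) (fun m => m i)
  exact ⟨m, hm, by rw [degreeOf_eq_sup, hmax]⟩

section CharZero

variable [CharZero R] [NoZeroDivisors R]

theorem sub_single_mem_support_pderiv {m : σ →₀ ℕ} (hm : m ∈ p.support) (hmi : m i ≠ 0) :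
    m - Finsupp.single i 1 ∈ (pderiv i p).support := by
  have hle : Finsupp.single i 1 ≤ m := Finsupp.single_le_iff.mpr (Nat.one_le_iff_ne_zero.mpr hmi)
  rw [mem_support_iff, coeff_pderiv, tsub_add_cancel_of_le hle]
  exact mul_ne_zero (mem_support_iff.mp hm) (Nat.cast_add_one_ne_zero _)

theorem pderiv_ne_zero_of_degreeOf_ne_zero (h : degreeOf i p ≠ 0) : pderiv i p ≠ 0 := by
  obtain ⟨m, hm, hmi⟩ := exists_mem_support_apply_eq_degreeOf i (ne_zero_of_degreeOf_ne_zero h)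
  exact support_nonempty.mp ⟨_, sub_single_mem_support_pderiv hm (hmi ▸ h)⟩

theorem degreeOf_pderiv_self (i : σ) (p : MvPolynomial σ R) :
    degreeOf i (pderiv i p) = degreeOf i p - 1 := by
  refine (degreeOf_pderiv_self_le i p).antisymm ?_
  obtain h | h := eq_or_ne (degreeOf i p) 0
  · omega
  obtain ⟨m, hm, hmi⟩ := exists_mem_support_apply_eq_degreeOf i (ne_zero_of_degreeOf_ne_zero h)
  have := le_degreeOf_of_mem_support i (sub_single_mem_support_pderiv hm (hmi ▸ h))
  rwa [Finsupp.tsub_apply, Finsupp.single_eq_same, hmi] at this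

theorem degreeOf_iterate_pderiv_self (i : σ) (k : ℕ) (p : MvPolynomial σ R) :
    degreeOf i ((pderiv i)^[k] p) = degreeOf i p - k := by
  induction k with
  | zero => rfl
  | succ k ih => rw [Function.iterate_succ_apply', degreeOf_pderiv_self, ih, Nat.sub_sub]

theorem iterate_pderiv_self_ne_zero (hp : p ≠ 0) {k : ℕ} (hk : k ≤ degreeOf i p) :
    (pderiv i)^[k] p ≠ 0 := by
  induction k with
  | zero => exact hp
  | succ k ih =>
    rw [Function.iterate_succ_apply']
    exact pderiv_ne_zero_of_degreeOf_ne_zero (by rw [degreeOf_iterate_pderiv_self]; omega)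

end CharZero

section Derivation

variable [Fintype σ] (D : Derivation R (MvPolynomial σ R) (MvPolynomial σ R))

theorem derivation_eq_sum_pderiv (f : MvPolynomial σ R) :
    D f = ∑ i, D (X i) * pderiv i f := by
  classical
  have hsum (g : MvPolynomial σ R) :
      (∑ i, D (X i) • pderiv i) g = ∑ i, D (X i) * pderiv i g := by
    rw [← Derivation.coeFnAddMonoidHom_apply, map_sum, Finset.sum_apply]
    rfl
  rw [← hsum]
  exact DFunLike.congr_fun (derivation_ext fun j => by simp [hsum, pderiv_X, Pi.single_apply]) f

theorem pderiv_derivation_apply (j : σ) (g : MvPolynomial σ R) :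
    pderiv j (D g) = D (pderiv j g) + ∑ i, pderiv j (D (X i)) * pderiv i g := by
  rw [derivation_eq_sum_pderiv D g, derivation_eq_sum_pderiv D (pderiv j g), map_sum]
  simp only [pderiv_mul, pderiv_comm j]
  rw [Finset.sum_add_distrib, add_comm]

theorem degreeOf_derivation_apply_le (j : σ) (g : MvPolynomial σ R)
    (hj : degreeOf j (D (X j)) ≤ 1) (hD : ∀ i ∈ g.vars, i ≠ j → degreeOf j (D (X i)) = 0) :
    degreeOf j (D g) ≤ degreeOf j g := by
  rw [derivation_eq_sum_pderiv D g]
  refine (degreeOf_sum_le _ _ _).trans (Finset.sup_le fun i _ => ?_)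
  by_cases hi : i ∈ g.vars
  swap
  · simp [pderiv_eq_zero_of_notMem_vars hi]
  refine (degreeOf_mul_le _ _ _).trans ?_
  obtain rfl | hij := eq_or_ne i j
  · have := degreeOf_pderiv_self_le i g
    have := mem_vars_iff_degreeOf_ne_zero.mp hi
    omega
  · rw [hD i hi hij, zero_add]
    exact degreeOf_pderiv_le j i g

variable {D} {ν : σ} {c : MvPolynomial σ R} (hDν : ∀ i ≠ ν, pderiv ν (D (X i)) = 0)
  (hDνν : pderiv ν (D (X ν)) = c)
include hDν hDνν

theorem pderiv_derivation_apply_of_pderiv_X (g : MvPolynomial σ R) :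
    pderiv ν (D g) = D (pderiv ν g) + c * pderiv ν g := by
  rw [pderiv_derivation_apply, Fintype.sum_eq_single ν fun i hi => by rw [hDν i hi, zero_mul],
    hDνν]

theorem iterate_pderiv_derivation_apply (hc : pderiv ν c = 0) (k : ℕ) (g : MvPolynomial σ R) :
    (pderiv ν)^[k] (D g) = D ((pderiv ν)^[k] g) + k * c * (pderiv ν)^[k] g := by
  induction k with
  | zero => simp
  | succ k ih =>
    simp only [Function.iterate_succ_apply', ih, map_add,
      pderiv_derivation_apply_of_pderiv_X hDν hDνν, pderiv_mul, hc, Derivation.map_natCast]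
    push_cast
    ring

end Derivation

end CommSemiring

section CommRing

variable [CommRing R] [NoZeroDivisors R] [CharZero R] [Fintype σ]

theorem derivation_apply_ne_X (D : Derivation R (MvPolynomial σ R) (MvPolynomial σ R))
    {ν μ : σ} {c : MvPolynomial σ R}
    (hDν : ∀ i ≠ ν, degreeOf ν (D (X i)) = 0) (hDνν : pderiv ν (D (X ν)) = c)
    (hcν : degreeOf ν c = 0) (hcμ : 1 ≤ degreeOf μ c)
    (hDμ : ∀ i ≠ ν, i ≠ μ → degreeOf μ (D (X i)) = 0) (hDμμ : degreeOf μ (D (X μ)) ≤ 1)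
    (f : MvPolynomial σ R) : D f ≠ X ν := by
  intro hf
  have hνD i (hi : i ≠ ν) := pderiv_eq_zero_of_degreeOf_eq_zero (hDν i hi)
  have hc := pderiv_eq_zero_of_degreeOf_eq_zero hcν
  have hμν : μ ≠ ν := by rintro rfl; omega
  set d := degreeOf ν f
  obtain hd | hd := Nat.eq_zero_or_pos d
  · have := iterate_pderiv_derivation_apply hνD hDνν hc 1 f
    simp [hf, pderiv_eq_zero_of_degreeOf_eq_zero hd] at this
  set F := (pderiv ν)^[d] f
  have hF : F ≠ 0 := iterate_pderiv_self_ne_zero (by rintro rfl; simp [d] at hd) le_rfl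
  have hFν : degreeOf ν F = 0 := (degreeOf_iterate_pderiv_self ν d f).trans (Nat.sub_self d)
  have hDF : degreeOf μ (D F) ≤ degreeOf μ F := by
    refine degreeOf_derivation_apply_le D μ F hDμμ fun i hi hiμ => hDμ i ?_ hiμ
    rintro rfl
    exact mem_vars_iff_degreeOf_ne_zero.mp hi hFν
  have hXν : degreeOf μ ((pderiv ν)^[d] (X ν : MvPolynomial σ R)) = 0 := by
    classical
    simpa [degreeOf_X, hμν] using degreeOf_iterate_pderiv_le μ ν d (X ν : MvPolynomial σ R)
  have hdcF : degreeOf μ ((d : MvPolynomial σ R) * c * F) = degreeOf μ c + degreeOf μ F := by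
    have hc0 : c ≠ 0 := by rintro rfl; simp at hcμ
    have hd0 : (d : MvPolynomial σ R) ≠ 0 := Nat.cast_ne_zero.mpr hd.ne'
    rw [degreeOf_mul_eq (mul_ne_zero hd0 hc0) hF, degreeOf_mul_eq hd0 hc0, ← C_eq_coe_nat,
      degreeOf_C, zero_add]
  have heq : (d : MvPolynomial σ R) * c * F = (pderiv ν)^[d] (X ν) - D F := by
    rw [← hf, iterate_pderiv_derivation_apply hνD hDνν hc]
    ring
  have := degreeOf_sub_le μ ((pderiv ν)^[d] (X ν)) (D F)
  rw [← heq, hdcF, hXν] at this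
  omega

end CommRing

section Triangular

variable [CommRing R] [LinearOrder σ] {a b : σ → MvPolynomial σ R}
  {D : Derivation R (MvPolynomial σ R) (MvPolynomial σ R)} {z : σ}

theorem degreeOf_derivation_X_of_lt (ha : ∀ i, a i ∈ supported R {j | j < i})
    (hb : ∀ i, b i ∈ supported R {j | j < i}) (hD1 : D (X z) = 1)
    (hDi : ∀ i ≠ z, D (X i) = a i * X i + b i) {i j : σ} (hij : i < j) :
    degreeOf j (D (X i)) = 0 := by
  refine degreeOf_eq_zero_of_mem_supported (s := Set.Iic i) ?_ (not_le.mpr hij)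
  by_cases hi : i = z
  · rw [hi, hD1]
    exact one_mem _
  have hsub : {j | j < i} ⊆ Set.Iic i := fun _ => le_of_lt
  rw [hDi i hi]
  exact add_mem (mul_mem (supported_mono hsub (ha i)) (Algebra.subset_adjoin ⟨i, le_rfl, rfl⟩))
    (supported_mono hsub (hb i))

theorem degreeOf_derivation_X_self_le (ha : ∀ i, a i ∈ supported R {j | j < i})
    (hb : ∀ i, b i ∈ supported R {j | j < i}) (hD1 : D (X z) = 1)
    (hDi : ∀ i ≠ z, D (X i) = a i * X i + b i) (i : σ) :
    degreeOf i (D (X i)) ≤ 1 := by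
  classical
  by_cases hi : i = z
  · simp [hi, hD1]
  rw [hDi i hi]
  have hX : degreeOf i (X i : MvPolynomial σ R) ≤ 1 := by
    rw [degreeOf_def]
    exact (Multiset.count_le_of_le i (degrees_X' i)).trans (by simp)
  have := degreeOf_add_le i (a i * X i) (b i)
  have := degreeOf_mul_le i (a i) (X i)
  have := degreeOf_eq_zero_of_mem_supported (ha i) (lt_irrefl i)
  have := degreeOf_eq_zero_of_mem_supported (hb i) (lt_irrefl i)
  omega

theorem pderiv_derivation_X_self (ha : ∀ i, a i ∈ supported R {j | j < i})
    (hb : ∀ i, b i ∈ supported R {j | j < i}) (hDi : ∀ i ≠ z, D (X i) = a i * X i + b i)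
    {i : σ} (hi : i ≠ z) :
    pderiv i (D (X i)) = a i := by
  rw [hDi i hi, map_add, pderiv_mul, pderiv_X_self,
    pderiv_eq_zero_of_degreeOf_eq_zero (degreeOf_eq_zero_of_mem_supported (ha i) (lt_irrefl i)),
    pderiv_eq_zero_of_degreeOf_eq_zero (degreeOf_eq_zero_of_mem_supported (hb i) (lt_irrefl i))]
  ring

end Triangular

end MvPolynomial

/-- For `D = ∂_{x₁} + Σ_{i=2}^{n} (aᵢ xᵢ + bᵢ) ∂_{xᵢ}` with
`aᵢ, bᵢ ∈ K[x₁, …, x_{i-1}]`: if `deg_{x_{n-1}} aₙ ≥ 1`, then `xₙ ∉ Im D`. -/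
theorem statement19 (K : Type*) [Field K] [CharZero K]
    (n : ℕ) (hn : 2 ≤ n)
    (a b : Fin n → MvPolynomial (Fin n) K)
    (ha : ∀ i : Fin n, a i ∈ supported K {j : Fin n | j < i})
    (hb : ∀ i : Fin n, b i ∈ supported K {j : Fin n | j < i})
    (D : Derivation K (MvPolynomial (Fin n) K) (MvPolynomial (Fin n) K))
    (hD1 : D (X (⟨0, by omega⟩ : Fin n)) = 1)
    (hDi : ∀ i : Fin n, i ≠ ⟨0, by omega⟩ → D (X i) = a i * X i + b i)
    (hdeg : 1 ≤ degreeOf (⟨n - 2, by omega⟩ : Fin n) (a ⟨n - 1, by omega⟩)) :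
    ¬ ∃ f : MvPolynomial (Fin n) K, D f = X (⟨n - 1, by omega⟩ : Fin n) := by
  rintro ⟨f, hf⟩
  refine derivation_apply_ne_X D (fun i hi => ?_) (pderiv_derivation_X_self ha hb hDi ?_)
    (degreeOf_eq_zero_of_mem_supported (ha _) (by simp)) hdeg (fun i hiν hiμ => ?_)
    (degreeOf_derivation_X_self_le ha hb hD1 hDi _) f hf
  · refine degreeOf_derivation_X_of_lt ha hb hD1 hDi ?_
    simp only [Ne, Fin.ext_iff, Fin.lt_def] at hi ⊢
    omega
  · simp only [Ne, Fin.ext_iff]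
    omega
  · refine degreeOf_derivation_X_of_lt ha hb hD1 hDi ?_
    simp only [Ne, Fin.ext_iff, Fin.lt_def] at hiν hiμ ⊢
    omega
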